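/- arXiv:1806.10975 — 3 statements merged into one kernel-verified Lean document; each statement's English description precedes it below -/
import Mathlib

section
/- Fix any ordering e_1, …, e_m of distinct vertex pairs on n vertices and any set S of k special vertices, 1 ≤ k ≤ n. Let G be the graph with edge set {e_1, …, e_m}, and let Ĝ be the graph obtained from the empty graph by considering e_1, …, e_m in order and adding e_i unless it would join two components each containing a special vertex. If G is connected, then Ĝ has exactly k connected components, each containing exactly one special vertex. -/
open Filter SimpleGraph Asymptotics
open scoped Topology

noncomputable section

attribute [local instance] Classical.propDecidable

/-- The number of vertex pairs among `n` vertices. -/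
def numPairs (n : ℕ) : ℕ := n.choose 2

/-- A sequence of `n.choose 2` unordered pairs of vertices. -/
abbrev EdgeSeq (n : ℕ) := Fin (numPairs n) → Sym2 (Fin n)

/-- Orderings of all non-diagonal vertex pairs. -/
def edgeOrderings (n : ℕ) : Finset (EdgeSeq n) :=
  Finset.univ.filter fun f => Function.Injective f ∧ ∀ i, ¬ (f i).IsDiag

/-- The sample space: a uniformly random ordering of all pairs together with a uniformly
random set of `k` special vertices. -/
def sample (n k : ℕ) : Finset (EdgeSeq n × Finset (Fin n)) :=
  (edgeOrderings n) ×ˢ (Finset.univ.powersetCard k)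

/-- Probability of the event `A` over a random ordering and a random special set. -/
def Pr (n k : ℕ) (A : EdgeSeq n → Finset (Fin n) → Prop) : ℝ :=
  (((sample n k).filter fun p => A p.1 p.2).card : ℝ) / ((sample n k).card : ℝ)

/-- Probability of the event `A` over a random ordering only. -/
def PrOrd (n : ℕ) (A : EdgeSeq n → Prop) : ℝ :=
  (((edgeOrderings n).filter A).card : ℝ) / ((edgeOrderings n).card : ℝ)

/-- `A` holds asymptotically almost surely. -/
def AAS (k : ℕ → ℕ) (A : (n : ℕ) → EdgeSeq n → Finset (Fin n) → Prop) : Prop :=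
  Tendsto (fun n => Pr n (k n) (A n)) atTop (nhds 1)

variable {V : Type*}

/-- Add the pair `e` as an edge. -/
def addEdge (G : SimpleGraph V) (e : Sym2 V) : SimpleGraph V :=
  SimpleGraph.fromEdgeSet (insert e G.edgeSet)

/-- Adding `e` to `G` would join two components, each containing a special vertex. -/
def collides (S : Finset V) (G : SimpleGraph V) (e : Sym2 V) : Prop :=
  ∃ u v : V, e = s(u, v) ∧ ¬ G.Reachable u v ∧
    (∃ a ∈ S, G.Reachable u a) ∧ (∃ b ∈ S, G.Reachable v b)

/-- One step of the constrained process. -/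
def hatStep (S : Finset V) (G : SimpleGraph V) (e : Sym2 V) : SimpleGraph V :=
  if collides S G e then G else addEdge G e

/-- The constrained graph built greedily from a list of pairs: each pair is added in turn
unless it would put two special vertices in the same component. -/
def hatList (S : Finset V) (l : List (Sym2 V)) : SimpleGraph V :=
  l.foldl (hatStep S) ⊥

/-- The graph `Ĝ_k(n,m)` of the constrained process. -/
def hatG {n : ℕ} (S : Finset (Fin n)) (f : EdgeSeq n) (m : ℕ) : SimpleGraph (Fin n) :=
  hatList S ((List.ofFn f).take m)

/-- The graph `G(n,m)` of the Erdős–Rényi process. -/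
def gnm {n : ℕ} (f : EdgeSeq n) (m : ℕ) : SimpleGraph (Fin n) :=
  SimpleGraph.fromEdgeSet {e | ∃ i : Fin (numPairs n), (i : ℕ) < m ∧ f i = e}

/-- The number of vertices of the connected component `C`. -/
def compSize [Fintype V] (G : SimpleGraph V) (C : G.ConnectedComponent) : ℕ :=
  (Finset.univ.filter fun v => G.connectedComponentMk v = C).card

/-- The components of `G`, as a `Finset`. -/
def components [Fintype V] (G : SimpleGraph V) : Finset G.ConnectedComponent :=
  Finset.univ.image G.connectedComponentMk

/-- The number of connected components of `G`. -/
def numComponents [Fintype V] (G : SimpleGraph V) : ℕ := (components G).card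

/-- The sizes of the components of `G`, sorted increasingly. -/
def compSizes [Fintype V] (G : SimpleGraph V) : List ℕ :=
  ((components G).val.map (compSize G)).sort (· ≤ ·)

/-- `L G i` is the size of the `i`-th largest component of `G` (`i = 1, 2, …`). -/
def L [Fintype V] (G : SimpleGraph V) (i : ℕ) : ℕ :=
  (compSizes G).reverse.getD (i - 1) 0

/-- A component is special if it contains a special vertex. -/
def specialComp (S : Finset V) (G : SimpleGraph V) (C : G.ConnectedComponent) : Prop :=
  ∃ v ∈ S, G.connectedComponentMk v = C

/-- The sizes of the special components of `G`, sorted increasingly. -/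
def specialCompSizes [Fintype V] (S : Finset V) (G : SimpleGraph V) : List ℕ :=
  (((components G).filter (specialComp S G)).val.map (compSize G)).sort (· ≤ ·)

/-- `Lhat S G i` is the size of the `i`-th largest special component of `G`. -/
def Lhat [Fintype V] (S : Finset V) (G : SimpleGraph V) (i : ℕ) : ℕ :=
  (specialCompSizes S G).reverse.getD (i - 1) 0

/-- The number of edges of `G`. -/
def numEdges [Fintype V] (G : SimpleGraph V) : ℕ :=
  (Finset.univ.filter fun e : Sym2 V => e ∈ G.edgeSet).card

/-- `M(n,k)`: the number of edges at the end of the constrained process. -/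
def Mfinal {n : ℕ} (S : Finset (Fin n)) (f : EdgeSeq n) : ℕ :=
  numEdges (hatG S f (numPairs n))

/-- `M̂(n,k)`: the first time at which the constrained process has exactly `k` components. -/
def Mhat {n : ℕ} (k : ℕ) (S : Finset (Fin n)) (f : EdgeSeq n) : ℕ :=
  sInf {m : ℕ | numComponents (hatG S f m) = k}

end

section Aux

open SimpleGraph

variable {V : Type*}

lemma le_addEdge (G : SimpleGraph V) (e : Sym2 V) : G ≤ addEdge G e := by
  intro v w h
  simp only [addEdge, SimpleGraph.fromEdgeSet_adj, Set.mem_insert_iff,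
    SimpleGraph.mem_edgeSet]
  exact ⟨Or.inr h, h.ne⟩

lemma le_hatStep (S : Finset V) (G : SimpleGraph V) (e : Sym2 V) : G ≤ hatStep S G e := by
  unfold hatStep
  split
  · exact le_refl G
  · exact le_addEdge G e

lemma le_foldl (S : Finset V) : ∀ (l : List (Sym2 V)) (G : SimpleGraph V),
    G ≤ l.foldl (hatStep S) G := by
  intro l
  induction l with
  | nil => intro G; exact le_refl G
  | cons e l ih =>
    intro G
    exact le_trans (le_hatStep S G e) (by simpa using ih (hatStep S G e))

lemma reachable_addEdge {G : SimpleGraph V} {u v a b : V}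
    (h : (addEdge G s(u,v)).Reachable a b) :
    G.Reachable a b ∨ (G.Reachable a u ∧ G.Reachable v b) ∨
      (G.Reachable a v ∧ G.Reachable u b) := by
  rw [SimpleGraph.reachable_iff_reflTransGen] at h
  induction h with
  | refl => exact Or.inl (SimpleGraph.Reachable.refl a)
  | tail hab hbc ih =>
    rename_i c d
    simp only [addEdge, SimpleGraph.fromEdgeSet_adj, Set.mem_insert_iff,
      SimpleGraph.mem_edgeSet] at hbc
    obtain ⟨h1 | h1, hne⟩ := hbc
    · rw [Sym2.eq_iff] at h1
      rcases h1 with ⟨rfl, rfl⟩ | ⟨rfl, rfl⟩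
      · rcases ih with h2 | ⟨h2, h3⟩ | ⟨h2, h3⟩
        · exact Or.inr (Or.inl ⟨h2, SimpleGraph.Reachable.refl _⟩)
        · exact Or.inr (Or.inl ⟨h2, SimpleGraph.Reachable.refl _⟩)
        · exact Or.inl h2
      · rcases ih with h2 | ⟨h2, h3⟩ | ⟨h2, h3⟩
        · exact Or.inr (Or.inr ⟨h2, SimpleGraph.Reachable.refl _⟩)
        · exact Or.inl h2
        · exact Or.inr (Or.inr ⟨h2, SimpleGraph.Reachable.refl _⟩)
    · rcases ih with h2 | ⟨h2, h3⟩ | ⟨h2, h3⟩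
      · exact Or.inl (h2.trans h1.reachable)
      · exact Or.inr (Or.inl ⟨h2, h3.trans h1.reachable⟩)
      · exact Or.inr (Or.inr ⟨h2, h3.trans h1.reachable⟩)

lemma inv_hatStep {S : Finset V} {G : SimpleGraph V}
    (hInv : ∀ a ∈ S, ∀ b ∈ S, G.Reachable a b → a = b) (e : Sym2 V) :
    ∀ a ∈ S, ∀ b ∈ S, (hatStep S G e).Reachable a b → a = b := by
  unfold hatStep
  split
  · exact hInv
  · rename_i hcol
    intro a ha b hb hr
    revert hcol hr
    refine Sym2.inductionOn e ?_
    intro u v hcol hr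
    rcases reachable_addEdge hr with h | ⟨h1, h2⟩ | ⟨h1, h2⟩
    · exact hInv a ha b hb h
    · have huv : G.Reachable u v := by
        by_contra hnr
        exact hcol ⟨u, v, rfl, hnr, ⟨a, ha, h1.symm⟩, ⟨b, hb, h2⟩⟩
      exact hInv a ha b hb (h1.trans (huv.trans h2))
    · have huv : G.Reachable u v := by
        by_contra hnr
        exact hcol ⟨u, v, rfl, hnr, ⟨b, hb, h2⟩, ⟨a, ha, h1.symm⟩⟩
      exact hInv a ha b hb (h1.trans (huv.symm.trans h2))

lemma inv_foldl {S : Finset V} : ∀ (l : List (Sym2 V)) (G : SimpleGraph V),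
    (∀ a ∈ S, ∀ b ∈ S, G.Reachable a b → a = b) →
    ∀ a ∈ S, ∀ b ∈ S, (l.foldl (hatStep S) G).Reachable a b → a = b := by
  intro l
  induction l with
  | nil => intro G h; exact h
  | cons e l ih =>
    intro G h
    exact ih (hatStep S G e) (inv_hatStep h e)

lemma foldl_edge {S : Finset V} : ∀ (l : List (Sym2 V)) (G : SimpleGraph V) (u v : V),
    s(u,v) ∈ l → u ≠ v →
    (l.foldl (hatStep S) G).Reachable u v ∨
      ((∃ s ∈ S, (l.foldl (hatStep S) G).Reachable u s) ∧
        (∃ s ∈ S, (l.foldl (hatStep S) G).Reachable v s)) := by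
  intro l
  induction l with
  | nil => simp
  | cons e l ih =>
    intro G u v hmem hne
    rcases List.mem_cons.mp hmem with heq | hmem'
    · subst heq
      by_cases hc : collides S G s(u,v)
      · have hstep : hatStep S G s(u,v) = G := by simp only [hatStep, if_pos hc]
        obtain ⟨u', v', hev, hnr, ⟨a, ha, hua⟩, ⟨b, hb, hvb⟩⟩ := hc
        have hle : G ≤ (s(u,v) :: l).foldl (hatStep S) G := by
          simp only [List.foldl_cons, hstep]
          exact le_foldl S l G
        rw [Sym2.eq_iff] at hev
        refine Or.inr ?_
        rcases hev with ⟨rfl, rfl⟩ | ⟨rfl, rfl⟩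
        · exact ⟨⟨a, ha, (hua.mono hle)⟩, ⟨b, hb, (hvb.mono hle)⟩⟩
        · exact ⟨⟨b, hb, (hvb.mono hle)⟩, ⟨a, ha, (hua.mono hle)⟩⟩
      · have hstep : hatStep S G s(u,v) = addEdge G s(u,v) := if_neg hc
        have hadj : (addEdge G s(u,v)).Adj u v := by
          simp only [addEdge, SimpleGraph.fromEdgeSet_adj]
          exact ⟨Set.mem_insert _ _, hne⟩
        refine Or.inl ?_
        have hle : addEdge G s(u,v) ≤ (s(u,v) :: l).foldl (hatStep S) G := by
          simp only [List.foldl_cons, hstep]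
          exact le_foldl S l _
        exact (hadj.reachable).mono hle
    · simpa using ih (hatStep S G e) u v hmem' hne

end Aux

/-- If the graph `G` formed by all of the pairs `e₁, …, e_m` is connected, then the
constrained graph `Ĝ` has exactly `k` connected components, each containing exactly one
special vertex. -/
theorem connected_gives_k_components {n k : ℕ} (S : Finset (Fin n)) (hcard : S.card = k)
    (hk : 1 ≤ k) (l : List (Sym2 (Fin n))) (hnd : l.Nodup) (hdiag : ∀ e ∈ l, ¬ e.IsDiag)
    (hconn : (SimpleGraph.fromEdgeSet {e | e ∈ l}).Connected) :
    numComponents (hatList S l) = k ∧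
    ∀ C ∈ components (hatList S l),
      ∃! v : Fin n, v ∈ S ∧ (hatList S l).connectedComponentMk v = C := by
  classical
  set Ghat := hatList S l with hGhat
  have hInvBot : ∀ a ∈ S, ∀ b ∈ S, (⊥ : SimpleGraph (Fin n)).Reachable a b → a = b := by
    intro a _ b _ h
    exact SimpleGraph.reachable_bot.mp h
  have hInv : ∀ a ∈ S, ∀ b ∈ S, Ghat.Reachable a b → a = b :=
    inv_foldl l ⊥ hInvBot
  obtain ⟨s₀, hs₀⟩ : ∃ s, s ∈ S := Finset.card_pos.mp (hcard ▸ hk) |>.imp fun _ h => h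
  have hreachS : ∀ x : Fin n, ∃ s ∈ S, Ghat.Reachable x s := by
    intro x
    have hx : (SimpleGraph.fromEdgeSet {e | e ∈ l}).Reachable s₀ x := hconn.preconnected s₀ x
    rw [SimpleGraph.reachable_iff_reflTransGen] at hx
    induction hx with
    | refl => exact ⟨s₀, hs₀, SimpleGraph.Reachable.refl s₀⟩
    | tail hab hbc ih =>
      rename_i c d
      rw [SimpleGraph.fromEdgeSet_adj] at hbc
      obtain ⟨hmem, hne⟩ := hbc
      rcases foldl_edge (S := S) l ⊥ c d hmem hne with h | ⟨_, h⟩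
      · obtain ⟨s, hs, hr⟩ := ih
        exact ⟨s, hs, (h.symm.trans hr)⟩
      · exact h
  have hcomp : components Ghat = S.image Ghat.connectedComponentMk := by
    ext C
    simp only [components, Finset.mem_image, Finset.mem_univ, true_and]
    constructor
    · rintro ⟨x, hx⟩
      obtain ⟨s, hs, hr⟩ := hreachS x
      exact ⟨s, hs, (SimpleGraph.ConnectedComponent.sound hr.symm).trans hx⟩
    · rintro ⟨s, _, hs⟩
      exact ⟨s, hs⟩
  constructor
  · rw [numComponents, hcomp, Finset.card_image_of_injOn, hcard]
    intro a ha b hb h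
    exact hInv a ha b hb (SimpleGraph.ConnectedComponent.exact h)
  · intro C hC
    rw [hcomp, Finset.mem_image] at hC
    obtain ⟨s, hs, hsC⟩ := hC
    refine ⟨s, ⟨hs, hsC⟩, ?_⟩
    rintro y ⟨hy, hyC⟩
    exact hInv y hy s hs (SimpleGraph.ConnectedComponent.exact (hyC.trans hsC.symm))
end

section
/- Let x = x(n), y = y(n), and the sequences 𝒞 = 𝒞(n) depend on a parameter n → ∞, with c = c(n) = max_i c_i, and suppose c ≪ y and x ≪ y. Then there is a constant K such that for all sufficiently large n, at the end of the (𝒞,x,y)-process, with probability at least 1 − exp(−x/(20c)), X(t_r) ≤ K · x · t_r / y. -/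
/-!
Conditionally on the first `q` steps, `1 + z ≤ eᶻ` gives
`E[exp(λ X(t_{q+1}))] ≤ exp(λ' X(t_q))` with `λ' = λ + (e^{λ c_q} - 1)/t_q`.
Iterating from `λ = A/t_r` down to time `0` bounds the moment generating function of `X(t_r)` at
`A/t_r` by `exp(λ₀ x)`. Since `e^v - 1 ≤ v + v²` for `v ≤ 1`, each step raises `λ t` by at most
`4A²c (1/t_q - 1/t_{q+1})`; these telescope, so `λ₀ t₀ ≤ 2A` as long as `4Ac ≤ y`.
Chernoff's bound with `A = y/(40c)` then gives `P(X(t_r) > 4x t_r/y) ≤ exp(-x/(20c))`.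
-/

open Filter MeasureTheory
open scoped Topology

noncomputable section

attribute [local instance] Classical.propDecidable

/-- `t_q = x + y + c_1 + ⋯ + c_q` (with `c` indexed from `0`). -/
def tseq (c : ℕ → ℕ) (x y : ℕ) (q : ℕ) : ℕ := x + y + ∑ i ∈ Finset.range q, c i

/-- The `(𝒞,x,y)`-process, driven by a sequence `u` of uniform random numbers:
with probability `X(t_q)/t_q` the `(q+1)`-st weight goes to `X`. -/
def Xproc (c : ℕ → ℕ) (x y : ℕ) (u : ℕ → ℝ) : ℕ → ℕ
  | 0 => x
  | q + 1 =>
      Xproc c x y u q +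
        if u q < (Xproc c x y u q : ℝ) / (tseq c x y q : ℝ) then c q else 0

/-- The uniform distribution on the unit interval. -/
def unif : Measure ℝ := volume.restrict (Set.Icc 0 1)

/-- The driving randomness: `r` independent uniform random numbers. -/
def procMeasure (r : ℕ) : Measure (Fin r → ℝ) := Measure.pi fun _ => unif

/-- The `(𝒞,x,y)`-process on the sample space `Fin r → ℝ`. -/
def XprocFin {r : ℕ} (c : ℕ → ℕ) (x y : ℕ) (ω : Fin r → ℝ) (q : ℕ) : ℕ :=
  Xproc c x y (fun i => if h : i < r then ω ⟨i, h⟩ else 0) q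

end

open ProbabilityTheory Real

instance : IsProbabilityMeasure unif := by
  constructor
  rw [unif, Measure.restrict_apply_univ, Real.volume_Icc]
  norm_num

instance (r : ℕ) : IsProbabilityMeasure (procMeasure r) := by
  rw [procMeasure]; infer_instance

lemma unif_Iio {p : ℝ} (h1 : p ≤ 1) : unif (Set.Iio p) = ENNReal.ofReal p := by
  have hinter : Set.Iio p ∩ Set.Icc 0 1 = Set.Ico 0 p := by
    ext u
    simp only [Set.mem_inter_iff, Set.mem_Iio, Set.mem_Icc, Set.mem_Ico]
    constructor
    · rintro ⟨hup, hu0, -⟩; exact ⟨hu0, hup⟩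
    · rintro ⟨hu0, hup⟩; exact ⟨hup, hu0, by linarith⟩
  rw [unif, Measure.restrict_apply measurableSet_Iio, hinter, Real.volume_Ico, sub_zero]

lemma integral_unif_ite {p : ℝ} (h0 : 0 ≤ p) (h1 : p ≤ 1) (a b : ℝ) :
    ∫ u, (if u < p then a else b) ∂unif = p * a + (1 - p) * b := by
  have hsplit : (fun u : ℝ => if u < p then a else b) =
      fun u => (Set.Iio p).indicator (fun _ => a - b) u + b := by
    ext u; by_cases h : u < p <;> simp [h]
  rw [hsplit, integral_add ((integrable_const _).indicator measurableSet_Iio) (integrable_const b),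
    integral_indicator_const _ measurableSet_Iio, integral_const, measureReal_def, measureReal_def,
    unif_Iio h1, ENNReal.toReal_ofReal h0, measure_univ, ENNReal.toReal_one, smul_eq_mul,
    smul_eq_mul]
  ring

lemma mul_exp_add_add_one_sub_mul_exp_le (p a b : ℝ) :
    p * exp (a + b) + (1 - p) * exp a ≤ exp (a + p * (exp b - 1)) :=
  calc p * exp (a + b) + (1 - p) * exp a = exp a * (p * (exp b - 1) + 1) := by
        rw [exp_add]; ring
    _ ≤ exp a * exp (p * (exp b - 1)) := by gcongr; exact add_one_le_exp _
    _ = exp (a + p * (exp b - 1)) := (exp_add _ _).symm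

lemma integral_procMeasure_succ {m : ℕ} {f : (Fin (m + 1) → ℝ) → ℝ}
    (hf : Integrable f (procMeasure (m + 1))) :
    ∫ ω, f ω ∂procMeasure (m + 1) =
      ∫ ω, ∫ u, f (Fin.insertNth (Fin.last m) u ω) ∂unif ∂procMeasure m := by
  set e := MeasurableEquiv.piFinSuccAbove (fun _ : Fin (m + 1) => ℝ) (Fin.last m)
  have he : MeasurePreserving e (procMeasure (m + 1)) (unif.prod (procMeasure m)) :=
    measurePreserving_piFinSuccAbove (fun _ => unif) (Fin.last m)
  rw [← he.symm.integral_comp e.symm.measurableEmbedding]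
  exact integral_prod_symm (fun z => f (e.symm z))
    ((he.symm.integrable_comp_emb e.symm.measurableEmbedding).2 hf)

lemma add_exp_sub_one_div_mul_le {l t c cc A s : ℝ} (hl : 0 ≤ l) (ht : 0 < t) (hc : 0 ≤ c)
    (hcc : c ≤ cc) (hA : 0 ≤ A) (hs : 0 ≤ s) (hAcc : 4 * A * cc ≤ t + c)
    (h : l * (t + c) ≤ A + 4 * A ^ 2 * cc * (1 / (t + c) - s)) :
    (l + (exp (l * c) - 1) / t) * t ≤ A + 4 * A ^ 2 * cc * (1 / t - s) := by
  have htc : 0 < t + c := by linarith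
  have hlt : l * (t + c) ≤ 2 * A := by
    have hK : 4 * A ^ 2 * cc * (1 / (t + c)) ≤ A := by
      rw [mul_one_div, div_le_iff₀ htc]; nlinarith
    nlinarith [mul_nonneg (mul_nonneg (sq_nonneg A) (hc.trans hcc)) hs]
  have hv : l * c ≤ 1 := by nlinarith [mul_nonneg hl hc]
  have hexp : exp (l * c) - 1 ≤ l * c + (l * c) ^ 2 := by
    have := abs_exp_sub_one_sub_id_le (x := l * c) (by rw [abs_of_nonneg (by positivity)]; exact hv)
    linarith [le_abs_self (exp (l * c) - 1 - l * c)]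
  have hsq : (l * c) ^ 2 ≤ 4 * A ^ 2 * cc * (1 / t - 1 / (t + c)) := by
    rw [show 1 / t - 1 / (t + c) = c / (t * (t + c)) by field_simp; ring, mul_div_assoc',
      le_div_iff₀ (by positivity)]
    calc (l * c) ^ 2 * (t * (t + c)) ≤ (l * (t + c)) ^ 2 * c * c := by
          have : t * (t + c) ≤ (t + c) ^ 2 := by nlinarith
          nlinarith [sq_nonneg (l * c)]
      _ ≤ (2 * A) ^ 2 * c * cc := by gcongr
      _ = 4 * A ^ 2 * cc * c := by ring
  calc (l + (exp (l * c) - 1) / t) * t = l * t + (exp (l * c) - 1) := by field_simp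
    _ ≤ l * (t + c) + (l * c) ^ 2 := by linarith
    _ ≤ A + 4 * A ^ 2 * cc * (1 / t - s) := by linarith

section

variable (C : ℕ → ℕ) (x y : ℕ)

lemma tseq_succ (q : ℕ) : tseq C x y (q + 1) = tseq C x y q + C q := by
  rw [tseq, tseq, Finset.sum_range_succ]
  ring

lemma le_tseq (q : ℕ) : y ≤ tseq C x y q := by
  unfold tseq; omega

lemma Xproc_add_le_tseq (u : ℕ → ℝ) (q : ℕ) : Xproc C x y u q + y ≤ tseq C x y q := by
  induction q with
  | zero => simp [Xproc, tseq]
  | succ q ih =>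
    rw [Xproc, tseq_succ]
    split <;> omega

lemma XprocFin_le_tseq {r : ℕ} (ω : Fin r → ℝ) (q : ℕ) :
    (XprocFin C x y ω q : ℝ) ≤ tseq C x y q := by
  have := Xproc_add_le_tseq C x y (fun i => if h : i < r then ω ⟨i, h⟩ else 0) q
  exact_mod_cast (Nat.le_add_right _ _).trans this

lemma Xproc_congr {u v : ℕ → ℝ} {q : ℕ} (h : ∀ i < q, u i = v i) :
    Xproc C x y u q = Xproc C x y v q := by
  induction q with
  | zero => rfl
  | succ q ih =>
    rw [Xproc, Xproc, ih fun i hi => h i (Nat.lt_succ_of_lt hi), h q (Nat.lt_succ_self q)]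

lemma XprocFin_insertNth_last {m : ℕ} (u : ℝ) (ω : Fin m → ℝ) :
    XprocFin C x y (Fin.insertNth (Fin.last m) u ω) (m + 1) =
      XprocFin C x y ω m + if u < (XprocFin C x y ω m : ℝ) / tseq C x y m then C m else 0 := by
  have hprefix : XprocFin C x y (Fin.insertNth (Fin.last m) u ω) m = XprocFin C x y ω m := by
    refine Xproc_congr C x y fun i hi => ?_
    rw [dif_pos (by omega), dif_pos hi, ← Fin.castSucc_mk, ← Fin.succAbove_last,
      Fin.insertNth_apply_succAbove]
  have hlast : Fin.insertNth (α := fun _ => ℝ) (Fin.last m) u ω ⟨m, m.lt_succ_self⟩ = u :=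
    Fin.insertNth_apply_same _ _ _
  simp only [XprocFin] at hprefix ⊢
  rw [Xproc, hprefix, dif_pos m.lt_succ_self, hlast]
  congr

lemma measurable_XprocFin (r q : ℕ) :
    Measurable fun ω : Fin r → ℝ => (XprocFin C x y ω q : ℝ) := by
  induction q with
  | zero => simp only [XprocFin, Xproc]; exact measurable_const
  | succ q ih =>
    have hcoord : Measurable fun ω : Fin r → ℝ => if h : q < r then ω ⟨q, h⟩ else 0 := by
      split
      · exact measurable_pi_apply _
      · exact measurable_const
    simp only [XprocFin, Xproc, Nat.cast_add, Nat.cast_ite, Nat.cast_zero] at ih ⊢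
    exact ih.add (Measurable.ite (measurableSet_lt hcoord (ih.div_const _))
      measurable_const measurable_const)

lemma integrable_exp_mul_XprocFin (r q : ℕ) (l : ℝ) :
    Integrable (fun ω => exp (l * XprocFin C x y ω q)) (procMeasure r) := by
  refine Integrable.of_bound ((measurable_XprocFin C x y r q).const_mul l).exp.aestronglyMeasurable
    (exp (|l| * tseq C x y q)) (ae_of_all _ fun ω => ?_)
  rw [norm_of_nonneg (exp_pos _).le, exp_le_exp]
  calc l * XprocFin C x y ω q ≤ |l| * XprocFin C x y ω q := by gcongr; exact le_abs_self l
    _ ≤ |l| * tseq C x y q := by gcongr; exact_mod_cast XprocFin_le_tseq C x y ω q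

noncomputable def rateStep (q : ℕ) (l : ℝ) : ℝ := l + (exp (l * C q) - 1) / tseq C x y q

noncomputable def rate : ℕ → ℝ → ℝ
  | 0, l => l
  | m + 1, l => rate m (rateStep C x y m l)

lemma integral_exp_mul_XprocFin_succ_le (m : ℕ) (l : ℝ) :
    ∫ ω, exp (l * XprocFin C x y ω (m + 1)) ∂procMeasure (m + 1) ≤
      ∫ ω, exp (rateStep C x y m l * XprocFin C x y ω m) ∂procMeasure m := by
  rw [integral_procMeasure_succ (integrable_exp_mul_XprocFin C x y _ _ l)]
  refine integral_mono_of_nonneg (ae_of_all _ fun ω => integral_nonneg fun u => (exp_pos _).le)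
    (integrable_exp_mul_XprocFin C x y _ _ _) (ae_of_all _ fun ω => ?_)
  set X : ℝ := (XprocFin C x y ω m : ℝ)
  set p : ℝ := X / tseq C x y m
  have hp0 : 0 ≤ p := by positivity
  have hp1 : p ≤ 1 := div_le_one_of_le₀ (XprocFin_le_tseq C x y ω m) (Nat.cast_nonneg _)
  have hcond : ∀ u : ℝ, exp (l * XprocFin C x y (Fin.insertNth (Fin.last m) u ω) (m + 1)) =
      if u < p then exp (l * X + l * C m) else exp (l * X) := by
    intro u
    rw [XprocFin_insertNth_last]
    split_ifs <;> simp only [X, Nat.cast_add, add_zero, mul_add]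
  calc ∫ u, exp (l * XprocFin C x y (Fin.insertNth (Fin.last m) u ω) (m + 1)) ∂unif
      = p * exp (l * X + l * C m) + (1 - p) * exp (l * X) := by
        simp only [hcond]; exact integral_unif_ite hp0 hp1 _ _
    _ ≤ exp (l * X + p * (exp (l * C m) - 1)) := mul_exp_add_add_one_sub_mul_exp_le _ _ _
    _ = exp (rateStep C x y m l * X) := by simp only [rateStep, p]; ring_nf

lemma mgf_XprocFin_le (m : ℕ) (l : ℝ) :
    mgf (fun ω => (XprocFin C x y ω m : ℝ)) (procMeasure m) l ≤ exp (rate C x y m l * x) := by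
  induction m generalizing l with
  | zero =>
    show mgf (fun _ => (x : ℝ)) (procMeasure 0) l ≤ _
    rw [mgf_const]; rfl
  | succ m ih => exact (integral_exp_mul_XprocFin_succ_le C x y m l).trans (ih _)

lemma rateStep_nonneg {l : ℝ} (hl : 0 ≤ l) (q : ℕ) : 0 ≤ rateStep C x y q l := by
  have hE : 0 ≤ exp (l * C q) - 1 := by
    linarith [one_le_exp (mul_nonneg hl (Nat.cast_nonneg (C q)))]
  unfold rateStep; positivity

lemma rate_mul_tseq_zero_le {cc : ℕ} {A s : ℝ} (hy : 0 < y) (hA : 0 ≤ A) (hs : 0 ≤ s)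
    (hAcc : 4 * A * cc ≤ y) (m : ℕ) (hC : ∀ q < m, C q ≤ cc) {l : ℝ} (hl : 0 ≤ l)
    (h : l * tseq C x y m ≤ A + 4 * A ^ 2 * cc * (1 / tseq C x y m - s)) :
    rate C x y m l * tseq C x y 0 ≤ A + 4 * A ^ 2 * cc * (1 / tseq C x y 0 - s) := by
  induction m generalizing l with
  | zero => exact h
  | succ m ih =>
    have hty : (y : ℝ) ≤ tseq C x y (m + 1) := by exact_mod_cast le_tseq C x y (m + 1)
    have htm : (0 : ℝ) < tseq C x y m := by exact_mod_cast hy.trans_le (le_tseq C x y m)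
    rw [tseq_succ, Nat.cast_add] at h hty
    exact ih (fun q hq => hC q (by omega)) (rateStep_nonneg C x y hl m)
      (add_exp_sub_one_div_mul_le hl htm (Nat.cast_nonneg _) (by exact_mod_cast hC m (by omega))
        hA hs (hAcc.trans hty) h)

lemma rate_mul_tseq_zero_le_two_mul {cc : ℕ} {A : ℝ} (hy : 0 < y) (hA : 0 ≤ A)
    (hAcc : 4 * A * cc ≤ y) (R : ℕ) (hC : ∀ q < R, C q ≤ cc) :
    rate C x y R (A / tseq C x y R) * tseq C x y 0 ≤ 2 * A := by
  have hty : ∀ q, (y : ℝ) ≤ tseq C x y q := fun q => by exact_mod_cast le_tseq C x y q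
  have hy' : (0 : ℝ) < y := by exact_mod_cast hy
  have htR : (0 : ℝ) < tseq C x y R := hy'.trans_le (hty R)
  refine (rate_mul_tseq_zero_le C x y (s := 1 / tseq C x y R) hy hA (by positivity) hAcc R hC
    (by positivity)
    (by rw [div_mul_cancel₀ _ htR.ne', sub_self, mul_zero, add_zero])).trans ?_
  have hK : 4 * A ^ 2 * cc * (1 / tseq C x y 0) ≤ A := by
    rw [mul_one_div, div_le_iff₀ (hy'.trans_le (hty 0))]
    nlinarith [hty 0]
  nlinarith [mul_nonneg (mul_nonneg (sq_nonneg A) (Nat.cast_nonneg cc)) (by positivity :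
    (0 : ℝ) ≤ 1 / tseq C x y R)]

lemma procMeasure_XprocFin_gt_le (hy : 0 < y) {R cc : ℕ} (hC : ∀ q < R, C q ≤ cc) :
    (procMeasure R).real {ω | 4 * x * tseq C x y R / y < (XprocFin C x y ω R : ℝ)} ≤
      exp (-x / (20 * cc)) := by
  rcases Nat.eq_zero_or_pos cc with rfl | hcc
  · simp [measureReal_le_one]
  have hy' : (0 : ℝ) < y := by exact_mod_cast hy
  have hcc' : (0 : ℝ) < cc := by exact_mod_cast hcc
  have hty : ∀ q, (y : ℝ) ≤ tseq C x y q := fun q => by exact_mod_cast le_tseq C x y q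
  have ht0 : (0 : ℝ) < tseq C x y 0 := hy'.trans_le (hty 0)
  have htR : (0 : ℝ) < tseq C x y R := hy'.trans_le (hty R)
  set A : ℝ := y / (40 * cc)
  set l : ℝ := A / tseq C x y R
  set a : ℝ := 4 * x * tseq C x y R / y
  have hrate : rate C x y R l * x ≤ x / (20 * cc) := by
    have hA : 4 * A * cc ≤ y := by simp only [A]; field_simp; linarith
    have h := rate_mul_tseq_zero_le_two_mul C x y hy (by positivity) hA R hC
    have hx : (0 : ℝ) ≤ x := Nat.cast_nonneg x
    calc rate C x y R l * x ≤ 2 * A / tseq C x y 0 * x := by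
          gcongr; rwa [le_div_iff₀ ht0]
      _ ≤ 2 * A / y * x := by gcongr; exact le_tseq C x y 0
      _ = x / (20 * cc) := by simp only [A]; field_simp; ring
  have hla : l * a = x / (10 * cc) := by simp only [l, a, A]; field_simp; ring
  calc (procMeasure R).real {ω | a < XprocFin C x y ω R}
      ≤ (procMeasure R).real {ω | a ≤ XprocFin C x y ω R} :=
        measureReal_mono fun ω (hω : a < _) => hω.le
    _ ≤ exp (-l * a) * mgf (fun ω => (XprocFin C x y ω R : ℝ)) (procMeasure R) l :=
        measure_ge_le_exp_mul_mgf a (by positivity) (integrable_exp_mul_XprocFin C x y R R l)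
    _ ≤ exp (-l * a) * exp (rate C x y R l * x) := by gcongr; exact mgf_XprocFin_le C x y R l
    _ ≤ exp (-x / (20 * cc)) := by
        rw [← exp_add, exp_le_exp, neg_mul, hla, neg_div]
        have : (x : ℝ) / (10 * cc) = 2 * (x / (20 * cc)) := by field_simp; ring
        linarith

lemma one_sub_exp_le_procMeasure_XprocFin_le (hy : 0 < y) {R cc : ℕ} (hC : ∀ q < R, C q ≤ cc) :
    1 - exp (-x / (20 * cc)) ≤
      (procMeasure R {ω | (XprocFin C x y ω R : ℝ) ≤ 4 * x * tseq C x y R / y}).toReal := by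
  have hmeas : MeasurableSet
      {ω : Fin R → ℝ | (XprocFin C x y ω R : ℝ) ≤ 4 * x * tseq C x y R / y} :=
    measurableSet_le (measurable_XprocFin C x y R R) measurable_const
  have hcompl := probReal_compl_eq_one_sub (μ := procMeasure R) hmeas
  have hgt := procMeasure_XprocFin_gt_le C x y hy hC
  simp only [Set.compl_ofPred, not_le] at hcompl
  rw [← measureReal_def]
  linarith

end

theorem cxy_process_end_general (r : ℕ → ℕ) (c : ℕ → ℕ → ℕ) (x y : ℕ → ℕ)
    (hx : (fun n => (x n : ℝ)) =o[atTop] fun n => (y n : ℝ)) :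
    ∃ K : ℝ, 0 < K ∧ ∀ᶠ n in atTop,
      1 - Real.exp (-(x n : ℝ) / (20 * (((Finset.range (r n)).sup (c n) : ℕ) : ℝ))) ≤
        (procMeasure (r n) {ω | (XprocFin (c n) (x n) (y n) ω (r n) : ℝ) ≤
          K * (x n : ℝ) * (tseq (c n) (x n) (y n) (r n) : ℝ) / (y n : ℝ)}).toReal := by
  refine ⟨4, by norm_num, ?_⟩
  filter_upwards [hx.bound one_pos] with n hn
  rcases Nat.eq_zero_or_pos (x n) with hx0 | hx0
  · simp [hx0]
  have hy : 0 < y n := by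
    simp only [Real.norm_natCast, one_mul, Nat.cast_le] at hn
    omega
  exact one_sub_exp_le_procMeasure_XprocFin_le (c n) (x n) (y n) hy
    fun q hq => Finset.le_sup (Finset.mem_range.2 hq)

/-- **Lemma (end of the `(𝒞,x,y)`-process).** Suppose `c, x ≪ y`. Then at the end of the
`(𝒞,x,y)`-process, with probability at least `1 − exp(−x/(20c))`, `X(t_r) = O(x t_r / y)`. -/
theorem cxy_process_end (r : ℕ → ℕ) (c : ℕ → ℕ → ℕ) (x y : ℕ → ℕ)
    (hc : (fun n => (((Finset.range (r n)).sup (c n) : ℕ) : ℝ)) =o[atTop]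
      fun n => (y n : ℝ))
    (hx : (fun n => (x n : ℝ)) =o[atTop] fun n => (y n : ℝ)) :
    ∃ K : ℝ, 0 < K ∧ ∀ᶠ n in atTop,
      1 - Real.exp (-(x n : ℝ) / (20 * (((Finset.range (r n)).sup (c n) : ℕ) : ℝ))) ≤
        (procMeasure (r n) {ω | (XprocFin (c n) (x n) (y n) ω (r n) : ℝ) ≤
          K * (x n : ℝ) * (tseq (c n) (x n) (y n) (r n) : ℝ) / (y n : ℝ)}).toReal :=
  cxy_process_end_general r c x y hx
end

section
/- Fix ε > 0 and let n ≥ 2. Let G be the complete graph on the n^2 vertices v_{i,j}, 1 ≤ i,j ≤ n, with edge weights w(v_{i,j} v_{k,ℓ}) = 1+ε if j = ℓ and 1 otherwise, and let S = { v_{1,j} : 1 ≤ j ≤ n }. Then: (i) the edge-first greedy algorithm (process the edges in decreasing weight order, adding an edge unless it would create a component containing two vertices of S) returns exactly the disjoint union of the n column cliques { v_{i,j} : 1 ≤ i ≤ n }, whose total weight is n·binom(n,2)·(1+ε) ∼ n^3(1+ε)/2; (ii) if R is the set of all edges incident to at least one vertex of S∖{v_{1,1}}, then removing R leaves no two vertices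 of S in the same component, the total weight of R is binom(n−1,2) + (n−1)(n^2 − (n−1)) + (n−1)^2 ε ∼ n^3, and the remaining graph G_R has total weight binom(n^2,2) + binom(n,2) n ε − w(R) ∼ n^4/2. Consequently, the weight of the graph retained by the valid solution G_R exceeds the weight retained by the greedy algorithm by a factor asymptotic to n/(1+ε). -/
open Filter SimpleGraph Asymptotics
open scoped Topology

noncomputable section

attribute [local instance] Classical.propDecidable

variable {V : Type*}

end

noncomputable section
attribute [local instance] Classical.propDecidable

/-- The weight of a pair of vertices of `K_{n²}`: `1 + ε` if the two vertices lie in the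
same column, and `1` otherwise. -/
def wt (ε : ℝ) {n : ℕ} (e : Sym2 (Fin n × Fin n)) : ℝ :=
  if (e.map Prod.snd).IsDiag then 1 + ε else 1

/-- The set `S = {v_{1,j} : 1 ≤ j ≤ n}` (the first row). -/
def Srow (n : ℕ) : Finset (Fin n × Fin n) :=
  Finset.univ.filter fun v => (v.1 : ℕ) = 0

/-- The total weight of the edges of `G`. -/
def wsum (ε : ℝ) {n : ℕ} (G : SimpleGraph (Fin n × Fin n)) : ℝ :=
  ∑ e ∈ Finset.univ.filter (fun e : Sym2 (Fin n × Fin n) => e ∈ G.edgeSet), wt ε e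

/-- The disjoint union of the `n` column cliques. -/
def Gcol (n : ℕ) : SimpleGraph (Fin n × Fin n) :=
  SimpleGraph.fromRel fun a b => a.2 = b.2

/-- The set `R` of all pairs incident to at least one vertex of `S ∖ {v_{1,1}}`. -/
def Rset (n : ℕ) : Set (Sym2 (Fin n × Fin n)) :=
  {e | ¬ e.IsDiag ∧ ∃ v ∈ e, (v.1 : ℕ) = 0 ∧ (v.2 : ℕ) ≠ 0}

/-- The graph `G_R` obtained from `K_{n²}` by removing the edges of `R`. -/
def GR (n : ℕ) : SimpleGraph (Fin n × Fin n) :=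
  SimpleGraph.fromEdgeSet {e | ¬ e.IsDiag ∧ e ∉ Rset n}

/-- The total weight of `R`. -/
def wR (ε : ℝ) (n : ℕ) : ℝ :=
  ∑ e ∈ Finset.univ.filter (fun e : Sym2 (Fin n × Fin n) => e ∈ Rset n), wt ε e


/-! Since `ε > 0`, a decreasing-weight order lists every same-column pair before every other
pair. While only column edges have been added, every component lies inside a column, which
contains exactly one vertex of `S`; so no column edge is rejected, and once all of them are in,
every remaining pair joins two components containing distinct vertices of `S` and is rejected.
In `G_R` every vertex of `S ∖ {v_{1,1}}` is isolated, so `R` is a multiway cut. The edge counts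
follow from the handshake lemma with explicitly computed degrees, and the normalized weights are
continuous functions of `1/n` equal to `1` at `0`. -/

open Finset

section Weights

variable {n : ℕ}

lemma sum_wt (ε : ℝ) (A : Finset (Sym2 (Fin n × Fin n))) :
    ∑ e ∈ A, wt ε e = #A + ε * #{e ∈ A | (e.map Prod.snd).IsDiag} := by
  rw [← card_filter_add_card_filter_not (s := A) (p := fun e => (e.map Prod.snd).IsDiag)]
  simp only [wt, sum_ite, sum_const, nsmul_eq_mul]
  push_cast
  ring

lemma Gcol_adj {a b : Fin n × Fin n} : (Gcol n).Adj a b ↔ a ≠ b ∧ a.2 = b.2 := by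
  rw [Gcol, fromRel_adj, or_iff_left_of_imp Eq.symm]

lemma mem_edgeSet_Gcol {e : Sym2 (Fin n × Fin n)} :
    e ∈ (Gcol n).edgeSet ↔ ¬ e.IsDiag ∧ (e.map Prod.snd).IsDiag := by
  induction e using Sym2.ind with
  | _ a b => simp [Gcol_adj]

lemma wsum_eq_sum_edgeFinset (ε : ℝ) (G : SimpleGraph (Fin n × Fin n)) [Fintype G.edgeSet] :
    wsum ε G = ∑ e ∈ G.edgeFinset, wt ε e :=
  sum_congr (by ext; simp) fun _ _ => rfl

lemma wsum_eq_card_add_mul_card (ε : ℝ) (G : SimpleGraph (Fin n × Fin n)) [Fintype G.edgeSet]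
    [Fintype (G ⊓ Gcol n).edgeSet] :
    wsum ε G = #G.edgeFinset + ε * #(G ⊓ Gcol n).edgeFinset := by
  have hcol : {e ∈ G.edgeFinset | (e.map Prod.snd).IsDiag} = (G ⊓ Gcol n).edgeFinset := by
    ext e
    simp only [mem_filter, edgeFinset_inf, mem_inter, mem_edgeFinset, mem_edgeSet_Gcol]
    exact ⟨fun h => ⟨h.1, G.not_isDiag_of_mem_edgeSet h.1, h.2⟩, fun h => ⟨h.1, h.2.2⟩⟩
  rw [wsum_eq_sum_edgeFinset, sum_wt, hcol]

lemma wsum_add_wsum_compl (ε : ℝ) (G : SimpleGraph (Fin n × Fin n)) :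
    wsum ε G + wsum ε Gᶜ = wsum ε (⊤ : SimpleGraph (Fin n × Fin n)) := by
  rw [wsum, wsum, wsum, ← sum_union]
  · congr 1
    ext e
    induction e using Sym2.ind with | _ a b => ?_
    simp only [mem_union, mem_filter, mem_univ, true_and, mem_edgeSet, compl_adj, top_adj]
    by_cases h : G.Adj a b
    · simp [h, G.ne_of_adj h]
    · simp [h]
  · refine disjoint_left.mpr fun e he hc => ?_
    simp only [mem_filter, mem_univ, true_and] at he hc
    induction e using Sym2.ind
    exact ((compl_adj _ _ _).mp hc).2 he

lemma wR_eq_wsum_compl_GR (ε : ℝ) : wR ε n = wsum ε (GR n)ᶜ := by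
  refine sum_congr ?_ fun _ _ => rfl
  ext e
  simp only [mem_filter, mem_univ, true_and]
  induction e using Sym2.ind with | _ a b => ?_
  simp only [mem_edgeSet, compl_adj, GR, fromEdgeSet_adj, Rset, Set.mem_ofPred_eq, ne_eq,
    Sym2.mk_isDiag_iff]
  generalize (∃ v ∈ s(a, b), (v.1 : ℕ) = 0 ∧ ¬(v.2 : ℕ) = 0) = P
  tauto

end Weights

section Counting

lemma two_mul_card_edgeFinset_eq_sum_degree {V : Type*} [Fintype V] (G : SimpleGraph V)
    [Fintype G.edgeSet] [∀ v, Fintype (G.neighborSet v)] :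
    2 * (#G.edgeFinset : ℝ) = ∑ v, (G.degree v : ℝ) := by
  classical
  exact_mod_cast (by convert G.sum_degrees_eq_twice_card_edges.symm :
    2 * #G.edgeFinset = ∑ v, G.degree v)

variable {n : ℕ}

lemma sum_ite_mem_univ {α : Type*} [Fintype α] [DecidableEq α] (T : Finset α) (a b : ℝ) :
    ∑ v, (if v ∈ T then a else b) = #T * a + (Fintype.card α - #T) * b := by
  rw [sum_ite, filter_mem_eq_inter, univ_inter, sum_const, sum_const, nsmul_eq_mul,
    nsmul_eq_mul, filter_notMem_eq_sdiff, card_univ_sdiff, Nat.cast_sub (card_le_univ T)]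

lemma Gcol_degree (v : Fin n × Fin n) : (Gcol n).degree v = n - 1 := by
  rw [← card_neighborFinset_eq_degree, neighborFinset_eq_filter]
  have : ({u | (Gcol n).Adj v u} : Finset _) = (univ ×ˢ {v.2}).erase v := by
    ext u
    simp only [mem_filter, mem_univ, true_and, Gcol_adj, mem_erase, mem_product,
      mem_singleton]
    exact ⟨fun h => ⟨h.1.symm, h.2.symm⟩, fun h => ⟨h.1.symm, h.2.symm⟩⟩
  rw [this, card_erase_of_mem (by simp), card_product, card_singleton, card_univ,
    Fintype.card_fin, mul_one]

lemma card_edgeFinset_Gcol [Fintype (Gcol n).edgeSet] :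
    #(Gcol n).edgeFinset = n * n.choose 2 := by
  have h : ∑ v, (Gcol n).degree v = 2 * #(Gcol n).edgeFinset := by
    convert (Gcol n).sum_degrees_eq_twice_card_edges
  simp only [Gcol_degree, sum_const, card_univ, Fintype.card_prod, Fintype.card_fin,
    smul_eq_mul] at h
  rw [Nat.choose_two_right, ← Nat.mul_div_assoc _ (Nat.even_mul_pred_self n).two_dvd,
    ← mul_assoc, h, Nat.mul_div_cancel_left _ two_pos]

/-- `S ∖ {v_{1,1}}`, with indices shifted to start at `0`. -/
def rowTail (n : ℕ) [NeZero n] : Finset (Fin n × Fin n) := {0} ×ˢ {0}ᶜ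

variable [NeZero n]

lemma mem_rowTail {v : Fin n × Fin n} : v ∈ rowTail n ↔ v.1 = 0 ∧ v.2 ≠ 0 := by
  simp only [rowTail, mem_product, mem_singleton, mem_compl]

lemma card_rowTail : #(rowTail n) = n - 1 := by
  simp [rowTail, card_compl]

lemma mem_Rset_mk {a b : Fin n × Fin n} :
    s(a, b) ∈ Rset n ↔ a ≠ b ∧ (a ∈ rowTail n ∨ b ∈ rowTail n) := by
  simp only [Rset, Set.mem_ofPred_eq, Sym2.mk_isDiag_iff, Sym2.mem_iff, or_and_right, exists_or,
    exists_eq_left, mem_rowTail, ne_eq, Fin.val_eq_zero_iff]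

lemma compl_GR_adj {a b : Fin n × Fin n} :
    (GR n)ᶜ.Adj a b ↔ a ≠ b ∧ (a ∈ rowTail n ∨ b ∈ rowTail n) := by
  rw [compl_adj, GR, fromEdgeSet_adj, ← mem_Rset_mk]
  simp only [Set.mem_ofPred_eq, Sym2.mk_isDiag_iff]
  have := (mem_Rset_mk (a := a) (b := b)).mp
  tauto

lemma compl_GR_degree (v : Fin n × Fin n) :
    ((GR n)ᶜ.degree v : ℝ) = if v ∈ rowTail n then (n : ℝ) ^ 2 - 1 else (n : ℝ) - 1 := by
  rw [← card_neighborFinset_eq_degree, neighborFinset_eq_filter]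
  split_ifs with hv
  · have : ({u | (GR n)ᶜ.Adj v u} : Finset _) = univ.erase v := by
      ext u
      simp only [mem_filter, mem_univ, true_and, compl_GR_adj, hv, true_or, and_true,
        mem_erase, ne_comm]
    rw [this, card_erase_of_mem (mem_univ v), Nat.cast_pred (card_pos.mpr ⟨v, mem_univ v⟩),
      card_univ, Fintype.card_prod, Fintype.card_fin]
    push_cast
    ring
  · have : ({u | (GR n)ᶜ.Adj v u} : Finset _) = rowTail n := by
      ext u
      simp only [mem_filter, mem_univ, true_and, compl_GR_adj, hv, false_or]
      exact ⟨And.right, fun hu => ⟨fun h => hv (h ▸ hu), hu⟩⟩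
    rw [this, card_rowTail, Nat.cast_pred (NeZero.pos n)]

lemma card_edgeFinset_compl_GR [Fintype (GR n)ᶜ.edgeSet] :
    (#(GR n)ᶜ.edgeFinset : ℝ) = ((n - 1).choose 2 : ℝ) + ((n : ℝ) - 1) * (n ^ 2 - (n - 1)) := by
  have h := two_mul_card_edgeFinset_eq_sum_degree (GR n)ᶜ
  simp only [compl_GR_degree, sum_ite_mem_univ, card_rowTail, Fintype.card_prod,
    Fintype.card_fin, Nat.cast_pred (NeZero.pos n)] at h
  rw [Nat.cast_choose_two, Nat.cast_pred (NeZero.pos n)]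
  push_cast at h
  linarith

lemma compl_GR_inf_Gcol_adj {a b : Fin n × Fin n} :
    ((GR n)ᶜ ⊓ Gcol n).Adj a b ↔ a ≠ b ∧ a.2 = b.2 ∧ (a ∈ rowTail n ∨ b ∈ rowTail n) := by
  rw [inf_adj, compl_GR_adj, Gcol_adj]
  tauto

lemma compl_GR_inf_Gcol_degree (v : Fin n × Fin n) :
    (((GR n)ᶜ ⊓ Gcol n).degree v : ℝ) =
      (if v ∈ rowTail n then (n : ℝ) - 1 else 0) +
        (if v ∈ ({0}ᶜ ×ˢ {0}ᶜ : Finset (Fin n × Fin n)) then 1 else 0) := by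
  rw [← card_neighborFinset_eq_degree, neighborFinset_eq_filter]
  obtain ⟨i, j⟩ := v
  by_cases hj : j = 0
  · have : ({u | ((GR n)ᶜ ⊓ Gcol n).Adj (i, j) u} : Finset _) = ∅ := by
      ext ⟨k, l⟩
      simp only [mem_filter, mem_univ, true_and, compl_GR_inf_Gcol_adj, mem_rowTail,
        notMem_empty, iff_false]
      grind
    rw [this]
    simp [hj, mem_rowTail]
  by_cases hi : i = 0
  · have : ({u | ((GR n)ᶜ ⊓ Gcol n).Adj (i, j) u} : Finset _) = (univ ×ˢ {j}).erase (i, j) := by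
      ext ⟨k, l⟩
      simp only [mem_filter, mem_univ, true_and, compl_GR_inf_Gcol_adj, mem_rowTail, mem_erase,
        mem_product, mem_singleton]
      grind
    rw [this, card_erase_of_mem (by simp), Nat.cast_pred (by simp [NeZero.pos n])]
    simp [hi, mem_rowTail, hj]
  · have : ({u | ((GR n)ᶜ ⊓ Gcol n).Adj (i, j) u} : Finset _) = {(0, j)} := by
      ext ⟨k, l⟩
      simp only [mem_filter, mem_univ, true_and, compl_GR_inf_Gcol_adj, mem_rowTail,
        mem_singleton, Prod.mk.injEq]
      grind
    rw [this]
    simp [hj, hi, mem_rowTail]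

lemma card_edgeFinset_compl_GR_inf_Gcol [Fintype ((GR n)ᶜ ⊓ Gcol n).edgeSet] :
    (#((GR n)ᶜ ⊓ Gcol n).edgeFinset : ℝ) = ((n : ℝ) - 1) ^ 2 := by
  have h := two_mul_card_edgeFinset_eq_sum_degree ((GR n)ᶜ ⊓ Gcol n)
  simp only [compl_GR_inf_Gcol_degree, sum_add_distrib, sum_ite_mem_univ, card_rowTail,
    card_product, card_compl, card_singleton, Fintype.card_fin, Nat.cast_mul,
    Nat.cast_pred (NeZero.pos n)] at h
  linarith

end Counting

section ClosedForms

variable (ε : ℝ) (n : ℕ)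

lemma wsum_Gcol : wsum ε (Gcol n) = (n : ℝ) * (n.choose 2 : ℝ) * (1 + ε) := by
  rw [wsum_eq_card_add_mul_card]
  simp only [edgeFinset_inf, inter_self, card_edgeFinset_Gcol, Nat.cast_mul]
  ring

lemma wsum_top :
    wsum ε (⊤ : SimpleGraph (Fin n × Fin n)) =
      ((n ^ 2).choose 2 : ℝ) + (n.choose 2 : ℝ) * n * ε := by
  have htop : #(⊤ : SimpleGraph (Fin n × Fin n)).edgeFinset = (n ^ 2).choose 2 := by
    convert card_edgeFinset_top_eq_card_choose_two (V := Fin n × Fin n)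
    simp [sq]
  rw [wsum_eq_card_add_mul_card, edgeFinset_inf,
    inter_eq_right.mpr (edgeFinset_subset_edgeFinset.mpr le_top), htop, card_edgeFinset_Gcol]
  push_cast
  ring

lemma wsum_GR :
    wsum ε (GR n) = ((n ^ 2).choose 2 : ℝ) + (n.choose 2 : ℝ) * (n : ℝ) * ε - wR ε n := by
  rw [← wsum_top, ← wsum_add_wsum_compl ε (GR n), wR_eq_wsum_compl_GR]
  ring

variable [NeZero n]

lemma wR_eq : wR ε n = ((n - 1).choose 2 : ℝ) + ((n : ℝ) - 1) * ((n : ℝ) ^ 2 - ((n : ℝ) - 1)) +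
    ((n : ℝ) - 1) ^ 2 * ε := by
  rw [wR_eq_wsum_compl_GR, wsum_eq_card_add_mul_card, card_edgeFinset_compl_GR,
    card_edgeFinset_compl_GR_inf_Gcol]
  ring

end ClosedForms

section Greedy

variable {V : Type*} {S : Finset V}

lemma addEdge_eq_sup (G : SimpleGraph V) (e : Sym2 V) : addEdge G e = G ⊔ fromEdgeSet {e} := by
  rw [addEdge, Set.insert_eq, fromEdgeSet_union, fromEdgeSet_edgeSet, sup_comm]

lemma foldl_hatStep_of_collides {G : SimpleGraph V} {l : List (Sym2 V)}
    (h : ∀ e ∈ l, collides S G e) : l.foldl (hatStep S) G = G := by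
  induction l with
  | nil => rfl
  | cons e l ih =>
    rw [List.foldl_cons, hatStep, if_pos (h e List.mem_cons_self)]
    exact ih fun x hx => h x (List.mem_cons_of_mem e hx)

lemma foldl_hatStep_of_not_collides {H G : SimpleGraph V} {l : List (Sym2 V)} (hG : G ≤ H)
    (hl : ∀ e ∈ l, e ∈ H.edgeSet) (hnc : ∀ G' ≤ H, ∀ e ∈ l, ¬ collides S G' e) :
    l.foldl (hatStep S) G = G ⊔ fromEdgeSet {e | e ∈ l} := by
  induction l generalizing G with
  | nil => simp
  | cons e l ih =>
    have hle : G ⊔ fromEdgeSet {e} ≤ H :=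
      sup_le hG (by simpa using Or.inr (hl e List.mem_cons_self))
    rw [List.foldl_cons, hatStep, if_neg (hnc G hG e List.mem_cons_self), addEdge_eq_sup,
      ih hle (fun x hx => hl x (List.mem_cons_of_mem e hx))
        (fun G' hG' x hx => hnc G' hG' x (List.mem_cons_of_mem e hx)),
      sup_assoc, ← fromEdgeSet_union]
    congr 3
    ext x
    simp

lemma List.exists_eq_append_of_pairwise_imp {α : Type*} {p : α → Prop} {l : List α}
    (h : l.Pairwise fun a b => p b → p a) :
    ∃ l₁ l₂, l = l₁ ++ l₂ ∧ (∀ e ∈ l₁, p e) ∧ ∀ e ∈ l₂, ¬ p e := by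
  induction l with
  | nil => exact ⟨[], [], rfl, by simp, by simp⟩
  | cons a l ih =>
    rw [List.pairwise_cons] at h
    by_cases ha : p a
    · obtain ⟨l₁, l₂, rfl, h₁, h₂⟩ := ih h.2
      exact ⟨a :: l₁, l₂, rfl, by simpa [ha] using h₁, h₂⟩
    · exact ⟨[], a :: l, rfl, by simp, by simpa [ha] using fun b hb hpb => ha (h.1 b hb hpb)⟩

end Greedy

section GreedyColumns

variable {n : ℕ}

lemma Gcol_reachable_iff {u v : Fin n × Fin n} : (Gcol n).Reachable u v ↔ u.2 = v.2 := by
  refine ⟨fun h => ?_, fun h => ?_⟩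
  · obtain ⟨w⟩ := h
    induction w with
    | nil => rfl
    | cons hadj _ ih => exact (Gcol_adj.mp hadj).2.trans ih
  · by_cases huv : u = v
    · exact huv ▸ Reachable.refl u
    · exact (Gcol_adj.mpr ⟨huv, h⟩).reachable

lemma mem_Srow {v : Fin n × Fin n} : v ∈ Srow n ↔ (v.1 : ℕ) = 0 := by
  simp [Srow]

lemma not_collides_of_le_Gcol {G : SimpleGraph (Fin n × Fin n)} (hG : G ≤ Gcol n)
    {e : Sym2 (Fin n × Fin n)} (he : (e.map Prod.snd).IsDiag) : ¬ collides (Srow n) G e := by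
  rintro ⟨u, v, rfl, huv, ⟨a, ha, hua⟩, ⟨b, hb, hvb⟩⟩
  have hab : a = b := by
    refine Prod.ext (Fin.ext ((mem_Srow.mp ha).trans (mem_Srow.mp hb).symm)) ?_
    rw [← Gcol_reachable_iff.mp (hua.mono hG), ← Gcol_reachable_iff.mp (hvb.mono hG)]
    simpa using he
  exact huv (hua.trans (hab ▸ hvb.symm))

lemma collides_Gcol [NeZero n] {e : Sym2 (Fin n × Fin n)} (he : ¬ (e.map Prod.snd).IsDiag) :
    collides (Srow n) (Gcol n) e := by
  induction e using Sym2.ind with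
  | _ u v =>
    refine ⟨u, v, rfl, fun h => he (by simpa using Gcol_reachable_iff.mp h),
      ⟨(0, u.2), by simp [mem_Srow], Gcol_reachable_iff.mpr rfl⟩,
      ⟨(0, v.2), by simp [mem_Srow], Gcol_reachable_iff.mpr rfl⟩⟩

lemma fromEdgeSet_columnPairs :
    fromEdgeSet {e : Sym2 (Fin n × Fin n) | (e.map Prod.snd).IsDiag} = Gcol n := by
  ext a b
  simp [Gcol_adj, and_comm]

lemma hatList_eq_Gcol [NeZero n] {ε : ℝ} (hε : 0 < ε) {l : List (Sym2 (Fin n × Fin n))}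
    (hmem : ∀ e, e ∈ l ↔ ¬ e.IsDiag) (hsort : l.Pairwise fun e₁ e₂ => wt ε e₂ ≤ wt ε e₁) :
    hatList (Srow n) l = Gcol n := by
  have hcol : l.Pairwise fun e₁ e₂ => (e₂.map Prod.snd).IsDiag → (e₁.map Prod.snd).IsDiag := by
    refine hsort.imp fun {e₁ e₂} hw h₂ => ?_
    by_contra h₁
    simp only [wt, if_pos h₂, if_neg h₁] at hw
    linarith
  obtain ⟨l₁, l₂, rfl, h₁, h₂⟩ := List.exists_eq_append_of_pairwise_imp hcol
  have hl₁ : fromEdgeSet {e | e ∈ l₁} = Gcol n := by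
    rw [← fromEdgeSet_columnPairs]
    ext a b
    simp only [fromEdgeSet_adj, Set.mem_ofPred_eq]
    refine and_congr_left fun hab => ⟨h₁ _, fun hc => ?_⟩
    rcases List.mem_append.mp ((hmem s(a, b)).mpr (by simpa using hab)) with h | h
    · exact h
    · exact absurd hc (h₂ _ h)
  rw [hatList, List.foldl_append,
    foldl_hatStep_of_not_collides bot_le
      (fun e he => mem_edgeSet_Gcol.mpr ⟨(hmem e).mp (List.mem_append_left l₂ he), h₁ e he⟩)
      (fun G hG e he => not_collides_of_le_Gcol hG (h₁ e he)),
    bot_sup_eq, hl₁, foldl_hatStep_of_collides fun e he => collides_Gcol (h₂ e he)]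

end GreedyColumns

lemma SimpleGraph.Reachable.eq_of_forall_not_adj {V : Type*} {G : SimpleGraph V} {a b : V}
    (hr : G.Reachable a b) (h : ∀ u, ¬ G.Adj a u) : a = b := by
  by_contra hab
  obtain ⟨w⟩ := hr
  exact h _ (w.adj_snd (Walk.not_nil_of_ne hab))

lemma not_reachable_GR {n : ℕ} [NeZero n] :
    ∀ a ∈ Srow n, ∀ b ∈ Srow n, a ≠ b → ¬ (GR n).Reachable a b := by
  have isolated : ∀ a ∈ rowTail n, ∀ u, ¬ (GR n).Adj a u := fun a ha u h =>
    ((compl_adj _ a u).mp (compl_GR_adj.mpr ⟨h.ne, Or.inl ha⟩)).2 h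
  intro a ha b hb hab hr
  simp only [mem_Srow, Fin.val_eq_zero_iff] at ha hb
  by_cases ha₂ : a.2 = 0
  · have hb₂ : b.2 ≠ 0 := fun hb₂ => hab (Prod.ext (ha.trans hb.symm) (ha₂.trans hb₂.symm))
    exact hab (hr.symm.eq_of_forall_not_adj (isolated b (mem_rowTail.mpr ⟨hb, hb₂⟩))).symm
  · exact hab (hr.eq_of_forall_not_adj (isolated a (mem_rowTail.mpr ⟨ha, ha₂⟩)))

section Limits

lemma tendsto_of_eventually_eq_comp_inv {f : ℕ → ℝ} {F : ℝ → ℝ} {a : ℝ} (hF : ContinuousAt F 0)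
    (h0 : F 0 = a) (h : ∀ᶠ n : ℕ in atTop, f n = F (n : ℝ)⁻¹) : Tendsto f atTop (𝓝 a) := by
  rw [← h0]
  exact (hF.tendsto.comp (tendsto_inv_atTop_zero.comp tendsto_natCast_atTop_atTop)).congr'
    (h.mono fun _ hn => hn.symm)

variable {ε : ℝ}

lemma tendsto_mul_choose_two_div_cube (hε : 1 + ε ≠ 0) :
    Tendsto (fun n : ℕ => ((n : ℝ) * (n.choose 2 : ℝ) * (1 + ε)) / ((n : ℝ) ^ 3 * (1 + ε) / 2))
      atTop (𝓝 1) := by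
  refine tendsto_of_eventually_eq_comp_inv (F := fun x => 1 - x) (by fun_prop) (by norm_num) ?_
  filter_upwards [eventually_ge_atTop 1] with n hn
  have : (n : ℝ) ≠ 0 := by positivity
  rw [Nat.cast_choose_two]
  field_simp

lemma tendsto_wR_div :
    Tendsto (fun n : ℕ => wR ε n / (n : ℝ) ^ 3) atTop (𝓝 1) := by
  refine tendsto_of_eventually_eq_comp_inv
    (F := fun x => x * (1 - x) * (1 - 2 * x) / 2 + (1 - x) * (1 - x + x ^ 2) + ε * x * (1 - x) ^ 2)
    (by fun_prop) (by norm_num) ?_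
  filter_upwards [eventually_ge_atTop 1] with n hn
  have : NeZero n := ⟨by omega⟩
  have : (n : ℝ) ≠ 0 := by positivity
  rw [wR_eq, Nat.cast_choose_two, Nat.cast_pred (by omega)]
  field_simp
  ring

lemma tendsto_wsum_GR_div :
    Tendsto (fun n : ℕ => wsum ε (GR n) / ((n : ℝ) ^ 4 / 2)) atTop (𝓝 1) := by
  refine tendsto_of_eventually_eq_comp_inv
    (F := fun x => 1 - x ^ 2 + ε * x * (1 - x) - 2 * x *
      (x * (1 - x) * (1 - 2 * x) / 2 + (1 - x) * (1 - x + x ^ 2) + ε * x * (1 - x) ^ 2))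
    (by fun_prop) (by norm_num) ?_
  filter_upwards [eventually_ge_atTop 1] with n hn
  have : NeZero n := ⟨by omega⟩
  have : (n : ℝ) ≠ 0 := by positivity
  rw [wsum_GR, wR_eq, Nat.cast_choose_two, Nat.cast_choose_two, Nat.cast_choose_two,
    Nat.cast_pred (by omega), Nat.cast_pow]
  field_simp
  ring

end Limits

lemma tendsto_wsum_GR_div_wsum_Gcol {ε : ℝ} (hε : 1 + ε ≠ 0) :
    Tendsto (fun n : ℕ => (wsum ε (GR n) / ((n : ℝ) * (n.choose 2 : ℝ) * (1 + ε))) /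
      ((n : ℝ) / (1 + ε))) atTop (𝓝 1) := by
  have h := (tendsto_wsum_GR_div (ε := ε)).div (tendsto_mul_choose_two_div_cube hε) one_ne_zero
  rw [div_one] at h
  refine h.congr' ?_
  filter_upwards [eventually_ge_atTop 2] with n hn
  have : (n : ℝ) ≠ 0 := by positivity
  have : (n.choose 2 : ℝ) ≠ 0 := Nat.cast_ne_zero.mpr (Nat.choose_pos hn).ne'
  simp only [Pi.div_apply]
  field_simp

/-- **Example (the greedy algorithm is no approximation algorithm).** On `K_{n²}` with
weights `1 + ε` on same-column pairs and `1` otherwise, and `S` the first row: the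
edge-first greedy algorithm (processing the edges in any decreasing-weight order) returns
exactly the union of the `n` column cliques, of total weight `n·binom(n,2)·(1+ε) ∼ n³(1+ε)/2`,
while removing all edges `R` incident to `S ∖ {v_{1,1}}` is a valid solution with
`w(R) = binom(n−1,2) + (n−1)(n²−(n−1)) + (n−1)²ε ∼ n³` and retained weight
`binom(n²,2) + binom(n,2)nε − w(R) ∼ n⁴/2`; so the valid solution retains a factor
`∼ n/(1+ε)` more weight than the greedy one. -/
theorem greedy_not_approximation (ε : ℝ) (hε : 0 < ε) :
    -- (i) the greedy algorithm returns exactly the column cliques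
    (∀ n : ℕ, 2 ≤ n → ∀ l : List (Sym2 (Fin n × Fin n)),
      l.Nodup → (∀ e, e ∈ l ↔ ¬ e.IsDiag) →
      l.Pairwise (fun e₁ e₂ => wt ε e₂ ≤ wt ε e₁) →
      hatList (Srow n) l = Gcol n ∧
      wsum ε (hatList (Srow n) l) = (n : ℝ) * (n.choose 2 : ℝ) * (1 + ε)) ∧
    Tendsto (fun n : ℕ => ((n : ℝ) * (n.choose 2 : ℝ) * (1 + ε)) /
      ((n : ℝ) ^ 3 * (1 + ε) / 2)) atTop (nhds 1) ∧
    -- (ii) removing `R` is a valid solution and its weights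
    (∀ n : ℕ, 2 ≤ n →
      (∀ a ∈ Srow n, ∀ b ∈ Srow n, a ≠ b → ¬ (GR n).Reachable a b) ∧
      wR ε n = ((n - 1).choose 2 : ℝ) + ((n : ℝ) - 1) * ((n : ℝ) ^ 2 - ((n : ℝ) - 1)) +
        ((n : ℝ) - 1) ^ 2 * ε ∧
      wsum ε (GR n) = ((n ^ 2).choose 2 : ℝ) + (n.choose 2 : ℝ) * (n : ℝ) * ε - wR ε n) ∧
    Tendsto (fun n : ℕ => wR ε n / (n : ℝ) ^ 3) atTop (nhds 1) ∧
    Tendsto (fun n : ℕ => wsum ε (GR n) / ((n : ℝ) ^ 4 / 2)) atTop (nhds 1) ∧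
    -- consequently the ratio of retained weights is asymptotic to `n/(1+ε)`
    Tendsto (fun n : ℕ => (wsum ε (GR n) / ((n : ℝ) * (n.choose 2 : ℝ) * (1 + ε))) /
      ((n : ℝ) / (1 + ε))) atTop (nhds 1) := by
  have hε' : 1 + ε ≠ 0 := by positivity
  refine ⟨fun n hn l _ hmem hsort => ?_, tendsto_mul_choose_two_div_cube hε', fun n hn => ?_,
    tendsto_wR_div, tendsto_wsum_GR_div, tendsto_wsum_GR_div_wsum_Gcol hε'⟩
  all_goals have : NeZero n := ⟨by omega⟩
  · have hG := hatList_eq_Gcol hε hmem hsort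
    exact ⟨hG, hG ▸ wsum_Gcol ε n⟩
  · exact ⟨not_reachable_GR, wR_eq ε n, wsum_GR ε n⟩

end
end
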